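/- Let $P$ be a lattice $d$-polytope. Then every element of the Hilbert basis of the cone $C(P) = \mathbb{R}_+\{(x,1) : x \in P\} \subset \mathbb{R}^{d+1}$ has degree (last coordinate) at most $d - 1$, provided $d \ge 2$. -/
import Mathlib


open Set Pointwise

/-- A point of `ℝ^ι` is a lattice point if all its coordinates are integers. -/
def IsLatticePt {ι : Type} (x : ι → ℝ) : Prop := ∀ i, ∃ n : ℤ, x i = n

/-- A lattice polytope: the convex hull of a nonempty finite set of lattice points. -/
def IsLatticePolytope {ι : Type} (P : Set (ι → ℝ)) : Prop :=
  ∃ V : Set (ι → ℝ), V.Finite ∧ V.Nonempty ∧ (∀ x ∈ V, IsLatticePt x) ∧ P = convexHull ℝ V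

/-- A polytope is normal if for every `c ≥ 1` each lattice point of the dilation `c • P`
is a sum of `c` lattice points of `P`. -/
def IsNormal {ι : Type} (P : Set (ι → ℝ)) : Prop :=
  ∀ c : ℕ, 0 < c → ∀ x : ι → ℝ, x ∈ (c : ℝ) • P → IsLatticePt x →
    ∃ f : Fin c → (ι → ℝ), (∀ i, f i ∈ P ∧ IsLatticePt (f i)) ∧ x = ∑ i, f i

/-- Every point of the cone `C(P) ⊆ ℝ^{d+1}` over a lattice `d`-polytope `P`. -/
def InHomogCone {d : ℕ} (P : Set (Fin d → ℝ)) (y : (Fin d → ℝ) × ℝ) : Prop :=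
  ∃ t : ℝ, 0 ≤ t ∧ ∃ x ∈ P, y = (t • x, t)

/-- A lattice point of `ℝ^{d+1} = ℝ^d × ℝ`. -/
def IsLatticePt' {d : ℕ} (y : (Fin d → ℝ) × ℝ) : Prop :=
  IsLatticePt y.1 ∧ ∃ n : ℤ, y.2 = n


lemma latt_zero {ι : Type} : IsLatticePt (0 : ι → ℝ) := fun i => ⟨0, by simp⟩

lemma latt_add {ι : Type} {x y : ι → ℝ} (hx : IsLatticePt x) (hy : IsLatticePt y) :
    IsLatticePt (x + y) := by
  intro i
  obtain ⟨m, hm⟩ := hx i; obtain ⟨n, hn⟩ := hy i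
  exact ⟨m + n, by simp [hm, hn]⟩

lemma latt_sub {ι : Type} {x y : ι → ℝ} (hx : IsLatticePt x) (hy : IsLatticePt y) :
    IsLatticePt (x - y) := by
  intro i
  obtain ⟨m, hm⟩ := hx i; obtain ⟨n, hn⟩ := hy i
  exact ⟨m - n, by simp [hm, hn]⟩

lemma latt_sum {ι : Type} (T : Finset (ι → ℝ)) (h : ∀ v ∈ T, IsLatticePt v) :
    IsLatticePt (∑ v ∈ T, v) :=
  Finset.sum_induction _ _ (fun _ _ => latt_add) latt_zero h

lemma lattice_finite {d : ℕ} (S : Finset (Fin d → ℝ)) :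
    {x : Fin d → ℝ | IsLatticePt x ∧ x ∈ convexHull ℝ (S : Set (Fin d → ℝ))}.Finite := by
  set M : ℝ := ∑ v ∈ S, ∑ i, |v i| with hM
  have hMnn : ∀ v ∈ S, ∀ i, |v i| ≤ M := by
    intro v hv i
    calc |v i| ≤ ∑ j, |v j| := Finset.single_le_sum (f := fun j => |v j|)
          (fun j _ => abs_nonneg _) (Finset.mem_univ i)
      _ ≤ M := Finset.single_le_sum (f := fun v => ∑ j, |v j|)
          (fun u _ => Finset.sum_nonneg fun j _ => abs_nonneg _) hv
  have hbox : convexHull ℝ (S : Set (Fin d → ℝ)) ⊆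
      Set.pi Set.univ (fun _ : Fin d => Set.Icc (-M) M) := by
    apply convexHull_min
    · intro v hv i _
      have := hMnn v hv i
      constructor
      · linarith [neg_abs_le (v i)]
      · linarith [le_abs_self (v i)]
    · exact convex_pi fun i _ => convex_Icc _ _
  apply Set.Finite.subset
    (Set.Finite.pi (fun i : Fin d =>
      (Set.finite_Icc (⌈-M⌉) ⌊M⌋).image (fun n : ℤ => (n : ℝ))))
  rintro x ⟨hlat, hx⟩ i _
  obtain ⟨n, hn⟩ := hlat i
  have hxi := hbox hx i (Set.mem_univ i)
  refine ⟨n, ⟨?_, ?_⟩, hn.symm⟩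
  · rw [Int.ceil_le]; rw [hn] at hxi; exact_mod_cast hxi.1
  · rw [Int.le_floor]; rw [hn] at hxi; exact_mod_cast hxi.2

lemma keyB {d : ℕ} (hd : 2 ≤ d) (N : ℕ) :
    ∀ S : Finset (Fin d → ℝ), (∀ v ∈ S, IsLatticePt v) →
    {x : Fin d → ℝ | IsLatticePt x ∧ x ∈ convexHull ℝ (S : Set (Fin d → ℝ))}.ncard ≤ N →
    ∀ n : ℕ, d ≤ n → ∀ z : Fin d → ℝ, IsLatticePt z →
    (n : ℝ)⁻¹ • z ∈ convexHull ℝ (S : Set (Fin d → ℝ)) →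
    ∃ p : Fin d → ℝ, IsLatticePt p ∧ p ∈ convexHull ℝ (S : Set (Fin d → ℝ)) ∧
      ((n : ℝ) - 1)⁻¹ • (z - p) ∈ convexHull ℝ (S : Set (Fin d → ℝ)) := by
  induction N using Nat.strong_induction_on with
  | _ N ih =>
  intro S hS hN n hdn z hzlat hz
  have hn2 : 2 ≤ n := le_trans hd hdn
  have hn0 : (0 : ℝ) < n := by exact_mod_cast Nat.pos_of_ne_zero (by omega)
  have hn1 : (0 : ℝ) < (n : ℝ) - 1 := by
    have : (2 : ℝ) ≤ n := by exact_mod_cast hn2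
    linarith
  -- Carathéodory
  rw [convexHull_eq_union] at hz
  simp only [Set.mem_iUnion, exists_prop] at hz
  obtain ⟨T, hTS, hTai, hzT⟩ := hz
  have hhTS : convexHull ℝ (T : Set (Fin d → ℝ)) ⊆ convexHull ℝ (S : Set (Fin d → ℝ)) :=
    convexHull_mono hTS
  rw [Finset.mem_convexHull'] at hzT
  obtain ⟨w, hw0, hw1, hcomb⟩ := hzT
  have hzeq : ∑ v ∈ T, ((n : ℝ) * w v) • v = z := by
    have h := congrArg (fun u : Fin d → ℝ => (n : ℝ) • u) hcomb
    simp only [Finset.smul_sum, smul_smul] at h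
    rwa [mul_inv_cancel₀ hn0.ne', one_smul] at h
  have hsuml : ∑ v ∈ T, (n : ℝ) * w v = n := by rw [← Finset.mul_sum, hw1, mul_one]
  by_cases hA : ∃ v₀ ∈ T, (1 : ℝ) ≤ (n : ℝ) * w v₀
  · -- Case A: some weight is at least 1; split off the corresponding vertex.
    obtain ⟨v₀, hv0T, hv₀⟩ := hA
    refine ⟨v₀, hS v₀ (hTS hv0T), subset_convexHull ℝ _ (hTS hv0T), ?_⟩
    apply hhTS
    rw [Finset.mem_convexHull']
    refine ⟨fun y => ((n : ℝ) - 1)⁻¹ * ((n : ℝ) * w y - if y = v₀ then 1 else 0), ?_, ?_, ?_⟩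
    · intro y hy
      have hite : (if y = v₀ then (1 : ℝ) else 0) ≤ (n : ℝ) * w y := by
        split
        · next h => rw [h]; exact hv₀
        · exact mul_nonneg hn0.le (hw0 y hy)
      exact mul_nonneg (inv_nonneg.2 hn1.le) (by linarith)
    · rw [← Finset.mul_sum, Finset.sum_sub_distrib, hsuml,
        Finset.sum_ite_eq' T v₀ (fun _ => (1 : ℝ)), if_pos hv0T]
      field_simp
    · have h1 : ∑ y ∈ T, (((n : ℝ) - 1)⁻¹ * ((n : ℝ) * w y - if y = v₀ then 1 else 0)) • y
          = ((n : ℝ) - 1)⁻¹ • (∑ y ∈ T, ((n : ℝ) * w y) • y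
            - ∑ y ∈ T, (if y = v₀ then (1 : ℝ) else 0) • y) := by
        rw [smul_sub, Finset.smul_sum, Finset.smul_sum, ← Finset.sum_sub_distrib]
        apply Finset.sum_congr rfl
        intro y _
        rw [mul_smul, sub_smul, smul_sub]
      rw [h1, hzeq]
      have h2 : ∑ y ∈ T, (if y = v₀ then (1 : ℝ) else 0) • y = v₀ := by
        have : ∀ y ∈ T, (if y = v₀ then (1 : ℝ) else 0) • y = if y = v₀ then y else 0 := by
          intro y _; split <;> simp
        rw [Finset.sum_congr rfl this, Finset.sum_ite_eq' T v₀ (fun y => y), if_pos hv0T]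
      rw [h2]
  · -- Case B
    push_neg at hA
    have hTne : T.Nonempty := Finset.nonempty_of_sum_ne_zero (by rw [hw1]; exact one_ne_zero)
    have hcard_le : T.card ≤ d + 1 := by
      have h1 := hTai.card_le_finrank_succ
      rw [Fintype.card_coe] at h1
      have h2 := Submodule.finrank_le (vectorSpan ℝ (Set.range ((↑) : ↑T → (Fin d → ℝ))))
      rw [Module.finrank_fin_fun] at h2
      omega
    have hnlt : (n : ℝ) < T.card := by
      calc (n : ℝ) = ∑ v ∈ T, (n : ℝ) * w v := hsuml.symm
        _ < ∑ _v ∈ T, 1 := Finset.sum_lt_sum_of_nonempty hTne fun v hv => hA v hv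
        _ = T.card := by rw [Finset.sum_const, nsmul_eq_mul, mul_one]
    have hnlt' : n < T.card := by exact_mod_cast hnlt
    have hnd : n = d := by omega
    have hcard : T.card = d + 1 := by omega
    have hnr : (n : ℝ) = d := by exact_mod_cast hnd
    have hlpos : ∀ v ∈ T, 0 < (n : ℝ) * w v := by
      intro v hv
      have hce : (T.erase v).card = d := by rw [Finset.card_erase_of_mem hv, hcard]; omega
      have herase : ∑ u ∈ T.erase v, (n : ℝ) * w u < d := by
        calc ∑ u ∈ T.erase v, (n : ℝ) * w u < ∑ _u ∈ T.erase v, 1 :=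
            Finset.sum_lt_sum_of_nonempty
              (by rw [← Finset.card_pos, hce]; omega)
              (fun u hu => hA u (Finset.mem_of_mem_erase hu))
          _ = d := by rw [Finset.sum_const, hce]; simp
      have hsplit : (n : ℝ) * w v + ∑ u ∈ T.erase v, (n : ℝ) * w u = (n : ℝ) := by
        rw [Finset.add_sum_erase T (fun v => (n : ℝ) * w v) hv]; exact hsuml
      linarith
    have hmpos : ∀ v ∈ T, 0 < 1 - (n : ℝ) * w v := fun v hv => by linarith [hA v hv]
    obtain ⟨x', hx'def⟩ : ∃ x' : Fin d → ℝ, x' = (∑ v ∈ T, v) - z := ⟨_, rfl⟩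
    have hmcomb : ∑ v ∈ T, (1 - (n : ℝ) * w v) • v = x' := by
      rw [hx'def]
      simp only [sub_smul, one_smul, Finset.sum_sub_distrib, hzeq]
    have hmsum : ∑ v ∈ T, (1 - (n : ℝ) * w v) = 1 := by
      rw [Finset.sum_sub_distrib, hsuml, Finset.sum_const, nsmul_eq_mul, mul_one, hcard, hnr]
      push_cast
      ring
    have hx'lat : IsLatticePt x' := by
      rw [hx'def]
      exact latt_sub (latt_sum T fun v hv => hS v (hTS hv)) hzlat
    have hx'T : x' ∈ convexHull ℝ (T : Set (Fin d → ℝ)) := by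
      rw [Finset.mem_convexHull']
      exact ⟨_, fun v hv => (hmpos v hv).le, hmsum, hmcomb⟩
    have hii : ∀ u ∈ T, u ∉ convexHull ℝ ((T.erase u : Finset _) : Set (Fin d → ℝ)) := by
      intro u hu hmem
      have hint := hTai.convexHull_inter (t₁ := {u}) (t₂ := T.erase u)
        (Finset.singleton_subset_iff.2 hu) (Finset.erase_subset _ _)
      have hu' : u ∈ convexHull ℝ ((↑({u} : Finset (Fin d → ℝ)) ∩ ↑(T.erase u)) :
          Set (Fin d → ℝ)) := by
        rw [hint]
        exact ⟨subset_convexHull ℝ _ (by simp), hmem⟩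
      have hdisj : ((↑({u} : Finset (Fin d → ℝ)) ∩ ↑(T.erase u)) : Set (Fin d → ℝ)) = ∅ := by
        apply Set.eq_empty_iff_forall_notMem.2
        rintro v ⟨hv1, hv2⟩
        rw [Finset.coe_singleton, Set.mem_singleton_iff] at hv1
        subst hv1
        exact Finset.notMem_erase v T (Finset.mem_coe.1 hv2)
      rw [hdisj] at hu'
      simpa using hu'
    have hkey : ∀ u ∈ T, ∀ ω : (Fin d → ℝ) → ℝ, (∀ v ∈ T.erase u, 0 ≤ ω v) →
        ∀ b : ℝ, 0 < b → ∑ v ∈ T.erase u, ω v = b →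
        ∑ v ∈ T.erase u, ω v • v = b • u → False := by
      intro u hu ω hω b hb hωsum hωcomb
      apply hii u hu
      rw [Finset.mem_convexHull']
      refine ⟨fun v => b⁻¹ * ω v, fun v hv => mul_nonneg (inv_nonneg.2 hb.le) (hω v hv), ?_, ?_⟩
      · rw [← Finset.mul_sum, hωsum, inv_mul_cancel₀ hb.ne']
      · simp only [mul_smul]
        rw [← Finset.smul_sum, hωcomb, inv_smul_smul₀ hb.ne']
    have hx'notT : x' ∉ T := by
      intro hx'T'
      have h1 : (1 - (n : ℝ) * w x') + ∑ v ∈ T.erase x', (1 - (n : ℝ) * w v) = 1 := by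
        rw [Finset.add_sum_erase T (fun v => 1 - (n : ℝ) * w v) hx'T']; exact hmsum
      have h2 : (1 - (n : ℝ) * w x') • x' + ∑ v ∈ T.erase x', (1 - (n : ℝ) * w v) • v = x' := by
        rw [Finset.add_sum_erase T (fun v => (1 - (n : ℝ) * w v) • v) hx'T']; exact hmcomb
      refine hkey x' hx'T' (fun v => 1 - (n : ℝ) * w v)
        (fun v hv => (hmpos v (Finset.mem_of_mem_erase hv)).le)
        ((n : ℝ) * w x') (hlpos x' hx'T') (by linarith) ?_
      have h3 : ∑ v ∈ T.erase x', (1 - (n : ℝ) * w v) • v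
          = x' - (1 - (n : ℝ) * w x') • x' := eq_sub_of_add_eq' h2
      rw [h3, sub_smul, one_smul]
      abel
    obtain ⟨v₀, hv0T, hmin⟩ := Finset.exists_min_image T
      (fun v => ((n : ℝ) * w v) / (1 - (n : ℝ) * w v)) hTne
    set c : ℝ := ((n : ℝ) * w v₀) / (1 - (n : ℝ) * w v₀) with hcdef
    have hc0 : 0 ≤ c := div_nonneg (hlpos v₀ hv0T).le (hmpos v₀ hv0T).le
    have hcv0 : c * (1 - (n : ℝ) * w v₀) = (n : ℝ) * w v₀ :=
      div_mul_cancel₀ _ (hmpos v₀ hv0T).ne'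
    have hcle : ∀ v ∈ T, c * (1 - (n : ℝ) * w v) ≤ (n : ℝ) * w v := by
      intro v hv
      have h := hmin v hv
      rw [hcdef, div_mul_eq_mul_div, div_le_iff₀ (hmpos v₀ hv0T)]
      rw [div_le_div_iff₀ (hmpos v₀ hv0T) (hmpos v hv)] at h
      linarith
    set T' : Finset (Fin d → ℝ) := insert x' (T.erase v₀) with hT'def
    have hx'ne : x' ∉ T.erase v₀ := fun h => hx'notT (Finset.mem_of_mem_erase h)
    have hT'lat : ∀ v ∈ T', IsLatticePt v := by
      intro v hv
      rcases Finset.mem_insert.1 hv with rfl | hv'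
      · exact hx'lat
      · exact hS v (hTS (Finset.mem_of_mem_erase hv'))
    have hT'hull : (T' : Set (Fin d → ℝ)) ⊆ convexHull ℝ (T : Set (Fin d → ℝ)) := by
      intro v hv
      rcases Finset.mem_insert.1 (by exact_mod_cast hv) with rfl | hv'
      · exact hx'T
      · exact subset_convexHull ℝ _ (Finset.mem_of_mem_erase hv')
    have hhT' : convexHull ℝ (T' : Set (Fin d → ℝ)) ⊆ convexHull ℝ (T : Set (Fin d → ℝ)) :=
      convexHull_min hT'hull (convex_convexHull ℝ _)
    -- sums over the erased set
    have hEl : ∑ v ∈ T.erase v₀, (n : ℝ) * w v = n - (n : ℝ) * w v₀ := by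
      have h : (n : ℝ) * w v₀ + ∑ v ∈ T.erase v₀, (n : ℝ) * w v = (n : ℝ) := by
        rw [Finset.add_sum_erase T (fun v => (n : ℝ) * w v) hv0T]; exact hsuml
      linarith
    have hEm : ∑ v ∈ T.erase v₀, (1 - (n : ℝ) * w v) = (n : ℝ) * w v₀ := by
      have h : (1 - (n : ℝ) * w v₀) + ∑ v ∈ T.erase v₀, (1 - (n : ℝ) * w v) = 1 := by
        rw [Finset.add_sum_erase T (fun v => 1 - (n : ℝ) * w v) hv0T]; exact hmsum
      linarith
    have hElv : ∑ v ∈ T.erase v₀, ((n : ℝ) * w v) • v = z - ((n : ℝ) * w v₀) • v₀ := by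
      have h : ((n : ℝ) * w v₀) • v₀ + ∑ v ∈ T.erase v₀, ((n : ℝ) * w v) • v = z := by
        rw [Finset.add_sum_erase T (fun v => ((n : ℝ) * w v) • v) hv0T]; exact hzeq
      exact eq_sub_of_add_eq' h
    have hEmv : ∑ v ∈ T.erase v₀, (1 - (n : ℝ) * w v) • v
        = x' - (1 - (n : ℝ) * w v₀) • v₀ := by
      have h : (1 - (n : ℝ) * w v₀) • v₀ + ∑ v ∈ T.erase v₀, (1 - (n : ℝ) * w v) • v = x' := by
        rw [Finset.add_sum_erase T (fun v => (1 - (n : ℝ) * w v) • v) hv0T]; exact hmcomb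
      exact eq_sub_of_add_eq' h
    have hzT' : (n : ℝ)⁻¹ • z ∈ convexHull ℝ (T' : Set (Fin d → ℝ)) := by
      rw [Finset.mem_convexHull']
      refine ⟨fun v => (n : ℝ)⁻¹ *
        (if v = x' then c else (n : ℝ) * w v - c * (1 - (n : ℝ) * w v)), ?_, ?_, ?_⟩
      · intro v hv
        beta_reduce
        by_cases hvx : v = x'
        · rw [if_pos hvx]; exact mul_nonneg (inv_nonneg.2 hn0.le) hc0
        · rw [if_neg hvx]
          have hv' : v ∈ T.erase v₀ := (Finset.mem_insert.1 hv).resolve_left hvx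
          have := hcle v (Finset.mem_of_mem_erase hv')
          exact mul_nonneg (inv_nonneg.2 hn0.le) (by linarith)
      · rw [Finset.sum_insert hx'ne]
        beta_reduce
        rw [if_pos rfl]
        have hcongr : ∑ v ∈ T.erase v₀, (n : ℝ)⁻¹ *
            (if v = x' then c else (n : ℝ) * w v - c * (1 - (n : ℝ) * w v))
            = ∑ v ∈ T.erase v₀, (n : ℝ)⁻¹ * ((n : ℝ) * w v - c * (1 - (n : ℝ) * w v)) := by
          apply Finset.sum_congr rfl
          intro v hv'
          rw [if_neg (fun h : v = x' => hx'ne (h ▸ hv'))]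
        rw [hcongr, ← Finset.mul_sum, Finset.sum_sub_distrib, hEl, ← Finset.mul_sum, hEm]
        have hc' : c - c * ((n : ℝ) * w v₀) = (n : ℝ) * w v₀ := by linear_combination hcv0
        field_simp
        linarith
      · rw [Finset.sum_insert hx'ne]
        beta_reduce
        rw [if_pos rfl]
        have hcongr : ∑ v ∈ T.erase v₀, ((n : ℝ)⁻¹ *
            (if v = x' then c else (n : ℝ) * w v - c * (1 - (n : ℝ) * w v))) • v
            = ∑ v ∈ T.erase v₀, (n : ℝ)⁻¹ •
              ((((n : ℝ) * w v) • v) - c • ((1 - (n : ℝ) * w v) • v)) := by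
          apply Finset.sum_congr rfl
          intro v hv'
          rw [if_neg (fun h : v = x' => hx'ne (h ▸ hv')), mul_smul, sub_smul, smul_smul]
        have hEmv' : c • (x' - (1 - (n : ℝ) * w v₀) • v₀)
            = c • x' - ((n : ℝ) * w v₀) • v₀ := by
          rw [smul_sub, smul_smul, hcv0]
        rw [hcongr, ← Finset.smul_sum, Finset.sum_sub_distrib, ← Finset.smul_sum (r := c),
          hElv, hEmv, hEmv', mul_smul, ← smul_add]
        congr 1
        abel
    have hv0not : v₀ ∉ convexHull ℝ (T' : Set (Fin d → ℝ)) := by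
      intro hmem
      rw [Finset.mem_convexHull'] at hmem
      obtain ⟨u, hu0, hu1, hucomb⟩ := hmem
      rw [Finset.sum_insert hx'ne] at hucomb hu1
      set a := u x' with hadef
      have ha0 : 0 ≤ a := hu0 x' (Finset.mem_insert_self _ _)
      have ha1 : a ≤ 1 := by
        have hnn : (0:ℝ) ≤ ∑ v ∈ T.erase v₀, u v :=
          Finset.sum_nonneg fun v hv => hu0 v (Finset.mem_insert_of_mem hv)
        linarith
      have hax' : a • x' = (a * (1 - (n : ℝ) * w v₀)) • v₀
          + ∑ v ∈ T.erase v₀, (a * (1 - (n : ℝ) * w v)) • v := by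
        have h1 : a • x' = ∑ v ∈ T, (a * (1 - (n : ℝ) * w v)) • v := by
          rw [← hmcomb, Finset.smul_sum]
          exact Finset.sum_congr rfl fun v _ => (smul_smul a _ v)
        rw [h1, ← Finset.add_sum_erase T _ hv0T]
      have hb0 : 0 < 1 - a * (1 - (n : ℝ) * w v₀) := by
        have h1 : a * (1 - (n : ℝ) * w v₀) ≤ 1 * (1 - (n : ℝ) * w v₀) :=
          mul_le_mul_of_nonneg_right ha1 (hmpos v₀ hv0T).le
        have := hlpos v₀ hv0T
        linarith
      refine hkey v₀ hv0T (fun v => a * (1 - (n : ℝ) * w v) + u v)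
        (fun v hv => add_nonneg
          (mul_nonneg ha0 (hmpos v (Finset.mem_of_mem_erase hv)).le)
          (hu0 v (Finset.mem_insert_of_mem hv)))
        (1 - a * (1 - (n : ℝ) * w v₀)) hb0 ?_ ?_
      · rw [Finset.sum_add_distrib, ← Finset.mul_sum, hEm]
        linarith
      · have h2 : ∑ v ∈ T.erase v₀, u v • v = v₀ - a • x' := eq_sub_of_add_eq' hucomb
        have h3 : ∑ v ∈ T.erase v₀, (a * (1 - (n : ℝ) * w v) + u v) • v
            = (∑ v ∈ T.erase v₀, (a * (1 - (n : ℝ) * w v)) • v)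
              + ∑ v ∈ T.erase v₀, u v • v := by
          rw [← Finset.sum_add_distrib]
          exact Finset.sum_congr rfl fun v _ => add_smul _ _ _
        rw [h3, h2, hax', sub_smul, one_smul]
        abel
    -- strict decrease of the number of lattice points
    have hLfin := lattice_finite S
    have hss : {x : Fin d → ℝ | IsLatticePt x ∧ x ∈ convexHull ℝ (T' : Set (Fin d → ℝ))} ⊂
        {x : Fin d → ℝ | IsLatticePt x ∧ x ∈ convexHull ℝ (S : Set (Fin d → ℝ))} := by
      constructor
      · rintro x ⟨hl, hx⟩
        exact ⟨hl, hhTS (hhT' hx)⟩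
      · intro hsub
        exact hv0not (hsub ⟨hS v₀ (hTS hv0T), subset_convexHull ℝ _ (hTS hv0T)⟩).2
    have hlt : {x : Fin d → ℝ | IsLatticePt x ∧
        x ∈ convexHull ℝ (T' : Set (Fin d → ℝ))}.ncard < N :=
      lt_of_lt_of_le (Set.ncard_lt_ncard hss hLfin) hN
    obtain ⟨p, hp1, hp2, hp3⟩ := ih _ hlt T' hT'lat le_rfl n hdn z hzlat hzT'
    exact ⟨p, hp1, hhTS (hhT' hp2), hhTS (hhT' hp3)⟩

/-- Every element of the Hilbert basis of `C(P)` (i.e. every irreducible nonzero lattice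
point of the cone) has degree at most `d - 1`. -/
theorem stmt_15 (d : ℕ) (hd : 2 ≤ d) (P : Set (Fin d → ℝ))
    (hP : IsLatticePolytope P)
    (hdim : Module.finrank ℝ (affineSpan ℝ P).direction = d) :
    ∀ y : (Fin d → ℝ) × ℝ, IsLatticePt' y → InHomogCone P y → y ≠ 0 →
      (¬∃ y₁ y₂ : (Fin d → ℝ) × ℝ, y₁ ≠ 0 ∧ y₂ ≠ 0 ∧
        IsLatticePt' y₁ ∧ InHomogCone P y₁ ∧
        IsLatticePt' y₂ ∧ InHomogCone P y₂ ∧ y = y₁ + y₂) →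
      y.2 ≤ (d : ℝ) - 1 := by
  intro y hy hcone hy0 hirr
  by_contra hgt
  push_neg at hgt
  obtain ⟨V, hVfin, hVne, hVlat, hPV⟩ := hP
  obtain ⟨t, ht0, x, hxP, hyeq⟩ := hcone
  obtain ⟨hylat, m, hy2⟩ := hy
  have hyt : y.2 = t := by rw [hyeq]
  have hy1 : y.1 = t • x := by rw [hyeq]
  have htm : t = (m : ℝ) := by rw [← hyt, hy2]
  have hdm : (d : ℤ) ≤ m := by
    have h : ((d : ℤ) : ℝ) - 1 < ((m : ℤ) : ℝ) := by push_cast; rw [← hy2]; exact hgt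
    have h' : (d : ℤ) - 1 < m := by exact_mod_cast h
    omega
  set n : ℕ := m.toNat with hndef
  have hdn : d ≤ n := by omega
  have hn2 : 2 ≤ n := le_trans hd hdn
  have htn : t = (n : ℝ) := by
    rw [htm]
    norm_cast
    omega
  have hn0 : (0 : ℝ) < n := by
    have : (0 : ℕ) < n := by omega
    exact_mod_cast this
  have hn1 : (0 : ℝ) < (n : ℝ) - 1 := by
    have : (2 : ℝ) ≤ n := by exact_mod_cast hn2
    linarith
  set S : Finset (Fin d → ℝ) := hVfin.toFinset with hSdef
  have hSV : (S : Set (Fin d → ℝ)) = V := hVfin.coe_toFinset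
  have hSlat : ∀ v ∈ S, IsLatticePt v := by
    intro v hv
    exact hVlat v (by rwa [← hSV, Finset.mem_coe])
  have hxhull : x ∈ convexHull ℝ (S : Set (Fin d → ℝ)) := by
    rw [hSV, ← hPV]; exact hxP
  have hinv : (n : ℝ)⁻¹ • y.1 = x := by
    rw [hy1, htn, inv_smul_smul₀ hn0.ne']
  obtain ⟨p, hplat, hpmem, hq⟩ :=
    keyB hd _ S hSlat le_rfl n hdn y.1 hylat (by rw [hinv]; exact hxhull)
  have hpP : p ∈ P := by rw [hPV, ← hSV]; exact hpmem
  have hqP : ((n : ℝ) - 1)⁻¹ • (y.1 - p) ∈ P := by rw [hPV, ← hSV]; exact hq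
  apply hirr
  refine ⟨(p, 1), (y.1 - p, (n : ℝ) - 1), ?_, ?_, ?_, ?_, ?_, ?_, ?_⟩
  · intro h
    have h2 := congrArg Prod.snd h
    norm_num at h2
  · intro h
    have h2 := congrArg Prod.snd h
    simp only [Prod.snd_zero] at h2
    exact hn1.ne' h2
  · exact ⟨hplat, 1, by norm_num⟩
  · exact ⟨1, zero_le_one, p, hpP, by simp⟩
  · refine ⟨latt_sub hylat hplat, (m : ℤ) - 1, ?_⟩
    simp only
    push_cast
    rw [← htm, htn]
  · refine ⟨(n : ℝ) - 1, hn1.le, ((n : ℝ) - 1)⁻¹ • (y.1 - p), hqP, ?_⟩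
    rw [smul_inv_smul₀ hn1.ne']
  · have hfst : y.1 = p + (y.1 - p) := by abel
    have hsnd : y.2 = 1 + ((n : ℝ) - 1) := by rw [hyt, htn]; ring
    rw [Prod.ext_iff]
    exact ⟨hfst, hsnd⟩
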